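/- arXiv:1308.5136 — 3 statements merged into one kernel-verified Lean document; each statement's English description precedes it below -/
import Mathlib

section
/- For interval type-2 fuzzy sets A, B over a finite nonempty domain X such that ū_A is not identically zero or ū_B is not identically zero, S_J(A,B) = 1 if and only if u̲_A = u̲_B and ū_A = ū_B. -/
open Finset

section SumMinMax

variable {ι M : Type*} [Fintype ι] [AddCommMonoid M] [LinearOrder M] [IsOrderedCancelAddMonoid M]

theorem sum_min_le_sum_max (f g : ι → M) : ∑ i, min (f i) (g i) ≤ ∑ i, max (f i) (g i) :=
  sum_le_sum fun _ _ => min_le_max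

theorem sum_min_eq_sum_max_iff (f g : ι → M) :
    ∑ i, min (f i) (g i) = ∑ i, max (f i) (g i) ↔ f = g := by
  rw [sum_eq_sum_iff_of_le fun _ _ => min_le_max, funext_iff]
  simp only [mem_univ, forall_const]
  exact forall_congr' fun _ => inf_eq_sup

theorem sum_min_add_sum_min_eq_sum_max_add_sum_max_iff (f g f' g' : ι → M) :
    (∑ i, min (f i) (g i)) + ∑ i, min (f' i) (g' i) =
        (∑ i, max (f i) (g i)) + ∑ i, max (f' i) (g' i) ↔ f = g ∧ f' = g' := by
  rw [add_eq_add_iff_eq_and_eq (sum_min_le_sum_max f g) (sum_min_le_sum_max f' g'),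
    sum_min_eq_sum_max_iff, sum_min_eq_sum_max_iff]

end SumMinMax

theorem sum_add_sum_pos_of_le {ι : Type*} [Fintype ι] {l u : ι → ℝ} (hl : ∀ i, 0 ≤ l i)
    (hlu : ∀ i, l i ≤ u i) (hu : ∃ i, u i ≠ 0) : 0 < (∑ i, u i) + ∑ i, l i := by
  obtain ⟨i, hi⟩ := hu
  have hu0 : ∀ j, 0 ≤ u j := fun j => (hl j).trans (hlu j)
  have : 0 < ∑ j, u j :=
    sum_pos' (fun j _ => hu0 j) ⟨i, mem_univ i, (hu0 i).lt_of_ne' hi⟩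
  linarith [sum_nonneg fun j (_ : j ∈ univ) => hl j]

theorem jaccard_eq_one_iff_general
    (X : Type*) [Fintype X]
    (lA uA lB uB : X → ℝ)
    (hA0 : ∀ x, 0 ≤ lA x) (hA : ∀ x, lA x ≤ uA x)
    (hnz : (∃ x, uA x ≠ 0) ∨ (∃ x, uB x ≠ 0)) :
    ((∑ x, min (uA x) (uB x)) + ∑ x, min (lA x) (lB x)) /
      ((∑ x, max (uA x) (uB x)) + ∑ x, max (lA x) (lB x)) = 1 ↔
    lA = lB ∧ uA = uB := by
  constructor
  · intro h
    have hD : (∑ x, max (uA x) (uB x)) + ∑ x, max (lA x) (lB x) ≠ 0 := by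
      -- a zero denominator makes the ratio `0` under Lean's `x / 0 = 0`
      rintro hD
      simp [hD] at h
    rw [div_eq_one_iff_eq hD, sum_min_add_sum_min_eq_sum_max_add_sum_max_iff] at h
    exact h.symm
  · rintro ⟨rfl, rfl⟩
    simp only [min_self, max_self]
    exact div_self (sum_add_sum_pos_of_le hA0 hA (or_self_iff.mp hnz)).ne'

theorem jaccard_eq_one_iff
    (X : Type*) [Fintype X] [Nonempty X]
    (lA uA lB uB : X → ℝ)
    (hA0 : ∀ x, 0 ≤ lA x) (hA : ∀ x, lA x ≤ uA x) (hA1 : ∀ x, uA x ≤ 1)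
    (hB0 : ∀ x, 0 ≤ lB x) (hB : ∀ x, lB x ≤ uB x) (hB1 : ∀ x, uB x ≤ 1)
    (hnz : (∃ x, uA x ≠ 0) ∨ (∃ x, uB x ≠ 0)) :
    ((∑ x, min (uA x) (uB x)) + ∑ x, min (lA x) (lB x)) /
      ((∑ x, max (uA x) (uB x)) + ∑ x, max (lA x) (lB x)) = 1 ↔
    lA = lB ∧ uA = uB :=
  jaccard_eq_one_iff_general X lA uA lB uB hA0 hA hnz
end

section
/- If interval type-2 fuzzy sets A ≤ B ≤ C pointwise (u̲_A ≤ u̲_B ≤ u̲_C and ū_A ≤ ū_B ≤ ū_C on the finite domain X), and the relevant denominators are positive, then the Jaccard similarity satisfies S_J(A,B) ≥ S_J(A,C). -/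
/-! For nested sets `A ≤ B` every minimum is attained by `A` and every maximum by `B`, so
`S_J(A, B) = |A| / |B|` with `|A| = ∑ ū_A + ∑ u̲_A`. The numerator is then fixed and the
denominator grows with `B`. -/

open Finset

section

variable {X : Type*} [Fintype X]

theorem sum_min_eq_left_of_le {β : Type*} [AddCommMonoid β] [LinearOrder β] {f g : X → β}
    (h : ∀ x, f x ≤ g x) : ∑ x, min (f x) (g x) = ∑ x, f x :=
  sum_congr rfl fun x _ => min_eq_left (h x)

theorem sum_max_eq_right_of_le {β : Type*} [AddCommMonoid β] [LinearOrder β] {f g : X → β}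
    (h : ∀ x, f x ≤ g x) : ∑ x, max (f x) (g x) = ∑ x, g x :=
  sum_congr rfl fun x _ => max_eq_right (h x)

noncomputable def jaccard (lA uA lB uB : X → ℝ) : ℝ :=
  ((∑ x, min (uA x) (uB x)) + ∑ x, min (lA x) (lB x)) /
    ((∑ x, max (uA x) (uB x)) + ∑ x, max (lA x) (lB x))

theorem jaccard_eq_of_le {lA uA lB uB : X → ℝ} (hl : ∀ x, lA x ≤ lB x) (hu : ∀ x, uA x ≤ uB x) :
    jaccard lA uA lB uB = ((∑ x, uA x) + ∑ x, lA x) / ((∑ x, uB x) + ∑ x, lB x) := by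
  rw [jaccard, sum_min_eq_left_of_le hl, sum_min_eq_left_of_le hu, sum_max_eq_right_of_le hl,
    sum_max_eq_right_of_le hu]

theorem jaccard_antitone_right {lA uA lB uB lC uC : X → ℝ}
    (hA0 : ∀ x, 0 ≤ lA x) (hA : ∀ x, lA x ≤ uA x)
    (hlAB : ∀ x, lA x ≤ lB x) (hlBC : ∀ x, lB x ≤ lC x)
    (huAB : ∀ x, uA x ≤ uB x) (huBC : ∀ x, uB x ≤ uC x)
    (hdenAB : 0 < (∑ x, uB x) + ∑ x, lB x) :
    jaccard lA uA lC uC ≤ jaccard lA uA lB uB := by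
  rw [jaccard_eq_of_le (fun x => (hlAB x).trans (hlBC x)) (fun x => (huAB x).trans (huBC x)),
    jaccard_eq_of_le hlAB huAB]
  have hnum : 0 ≤ (∑ x, uA x) + ∑ x, lA x :=
    add_nonneg (sum_nonneg fun x _ => (hA0 x).trans (hA x)) (sum_nonneg fun x _ => hA0 x)
  have hden : (∑ x, uB x) + ∑ x, lB x ≤ (∑ x, uC x) + ∑ x, lC x :=
    add_le_add (sum_le_sum fun x _ => huBC x) (sum_le_sum fun x _ => hlBC x)
  exact div_le_div_of_nonneg_left hnum hdenAB hden

end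

theorem jaccard_transitive_general
    (X : Type*) [Fintype X]
    (lA uA lB uB lC uC : X → ℝ)
    (hA0 : ∀ x, 0 ≤ lA x) (hA : ∀ x, lA x ≤ uA x)
    (hlAB : ∀ x, lA x ≤ lB x) (hlBC : ∀ x, lB x ≤ lC x)
    (huAB : ∀ x, uA x ≤ uB x) (huBC : ∀ x, uB x ≤ uC x)
    (hdenAB : 0 < (∑ x, max (uA x) (uB x)) + ∑ x, max (lA x) (lB x)) :
    ((∑ x, min (uA x) (uC x)) + ∑ x, min (lA x) (lC x)) /
      ((∑ x, max (uA x) (uC x)) + ∑ x, max (lA x) (lC x)) ≤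
    ((∑ x, min (uA x) (uB x)) + ∑ x, min (lA x) (lB x)) /
      ((∑ x, max (uA x) (uB x)) + ∑ x, max (lA x) (lB x)) := by
  rw [sum_max_eq_right_of_le huAB, sum_max_eq_right_of_le hlAB] at hdenAB
  exact jaccard_antitone_right hA0 hA hlAB hlBC huAB huBC hdenAB

theorem jaccard_transitive
    (X : Type*) [Fintype X]
    (lA uA lB uB lC uC : X → ℝ)
    (hA0 : ∀ x, 0 ≤ lA x) (hA : ∀ x, lA x ≤ uA x) (hA1 : ∀ x, uA x ≤ 1)
    (hB0 : ∀ x, 0 ≤ lB x) (hB : ∀ x, lB x ≤ uB x) (hB1 : ∀ x, uB x ≤ 1)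
    (hC0 : ∀ x, 0 ≤ lC x) (hC : ∀ x, lC x ≤ uC x) (hC1 : ∀ x, uC x ≤ 1)
    (hlAB : ∀ x, lA x ≤ lB x) (hlBC : ∀ x, lB x ≤ lC x)
    (huAB : ∀ x, uA x ≤ uB x) (huBC : ∀ x, uB x ≤ uC x)
    (hdenAB : 0 < (∑ x, max (uA x) (uB x)) + ∑ x, max (lA x) (lB x))
    (hdenAC : 0 < (∑ x, max (uA x) (uC x)) + ∑ x, max (lA x) (lC x)) :
    ((∑ x, min (uA x) (uC x)) + ∑ x, min (lA x) (lC x)) /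
      ((∑ x, max (uA x) (uC x)) + ∑ x, max (lA x) (lC x)) ≤
    ((∑ x, min (uA x) (uB x)) + ∑ x, min (lA x) (lB x)) /
      ((∑ x, max (uA x) (uB x)) + ∑ x, max (lA x) (lB x)) :=
  jaccard_transitive_general X lA uA lB uB lC uC hA0 hA hlAB hlBC huAB huBC hdenAB
end

section
/- The Gorzałczany compatibility measure is not reflexive: there exist interval type-2 fuzzy sets A ≠ B over a finite domain with max_x u̲_A(x) = max_x u̲_B(x) > 0 and max_x ū_A(x) = max_x ū_B(x) > 0 such that S_G(A,B) = (1,1). -/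
/-! Over a two-point domain take A = (1, 0) and B = (1, 1/2), with equal lower and upper
memberships. Then A ≤ B pointwise, so min(A, B) = A and both ratios are sup A / sup A = 1,
while A ≠ B. -/

theorem ciSup_eq_of_forall_le_of_eq {ι : Sort*} {f : ι → ℝ} {c : ℝ} (hle : ∀ i, f i ≤ c)
    (i₀ : ι) (hi₀ : f i₀ = c) : ⨆ i, f i = c :=
  have : Nonempty ι := ⟨i₀⟩
  ciSup_eq_of_forall_le_of_forall_lt_exists_gt hle fun _ hw => ⟨i₀, hi₀ ▸ hw⟩

theorem iSup_min_div_iSup_eq_one_of_le {ι : Sort*} {f g : ι → ℝ} (hfg : ∀ i, f i ≤ g i)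
    (hf : 0 < ⨆ i, f i) : (⨆ i, min (f i) (g i)) / (⨆ i, f i) = 1 := by
  simp only [min_eq_left (hfg _)]
  exact div_self hf.ne'

theorem iSup_vecCons_one_eq_one {a : ℝ} (ha : a ≤ 1) : ⨆ i, ![1, a] i = 1 :=
  ciSup_eq_of_forall_le_of_eq (fun i => by fin_cases i <;> simp [ha]) 0 rfl

theorem gorzalczany_not_reflexive :
    ∃ (n : ℕ) (_ : 0 < n) (lA uA lB uB : Fin n → ℝ),
      (∀ i, 0 ≤ lA i) ∧ (∀ i, lA i ≤ uA i) ∧ (∀ i, uA i ≤ 1) ∧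
      (∀ i, 0 ≤ lB i) ∧ (∀ i, lB i ≤ uB i) ∧ (∀ i, uB i ≤ 1) ∧
      (lA, uA) ≠ (lB, uB) ∧
      (⨆ i, lA i) = (⨆ i, lB i) ∧ 0 < (⨆ i, lA i) ∧
      (⨆ i, uA i) = (⨆ i, uB i) ∧ 0 < (⨆ i, uA i) ∧
      (⨆ i, min (lA i) (lB i)) / (⨆ i, lA i) = 1 ∧
      (⨆ i, min (uA i) (uB i)) / (⨆ i, uA i) = 1 := by
  set A : Fin 2 → ℝ := ![1, 0]
  set B : Fin 2 → ℝ := ![1, 1 / 2]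
  have hA : ⨆ i, A i = 1 := iSup_vecCons_one_eq_one zero_le_one
  have hB : ⨆ i, B i = 1 := iSup_vecCons_one_eq_one (by norm_num)
  have hAB : ∀ i, A i ≤ B i := fun i => by fin_cases i <;> norm_num [A, B]
  have hA_pos : 0 < ⨆ i, A i := hA ▸ one_pos
  have hA_ne_B : A ≠ B := fun h => by simpa [A, B] using congrFun h 1
  refine ⟨2, two_pos, A, A, B, B, fun i => ?_, fun _ => le_rfl, fun i => ?_,
    fun i => ?_, fun _ => le_rfl, fun i => ?_, fun h => hA_ne_B (congrArg Prod.fst h), hA.trans hB.symm, hA_pos,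
    hA.trans hB.symm, hA_pos, iSup_min_div_iSup_eq_one_of_le hAB hA_pos,
    iSup_min_div_iSup_eq_one_of_le hAB hA_pos⟩ <;> fin_cases i <;> norm_num [A, B]
end
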